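/- Let N be a Petri net with a vertex cover VC of G(N). Suppose σ = σ₁'σ̲₁σ₂'⋯σ_α'σ̲_α is a Y-neglecting weakly M, Q, ω-enabled X-pumping sequence. Then for any n₁, n₁', n₂, n₂', …, n_α ∈ ℕ, the sequence σ' = σ₁'σ₁^{n₁}σ̲₁σ₁^{n₁'}σ₂'⋯σ_α'σ_α^{n_α}σ̲_α is also a Y-neglecting weakly M, Q, ω-enabled X-pumping sequence, where σ_λ denotes the same transition sequence as σ̲_λ but the copies σ_λ^{n_λ}, σ_λ^{n_λ'} are not counted as pumping portions (only the displayed σ̲_λ are the pumping portions of σ'). -/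

import Mathlib

open Finset

/-- A Petri net on places `P` and transitions `T`,
given by the two incidence functions. -/
structure PetriNet (P T : Type) where
  Pre : P → T → ℕ
  Post : P → T → ℕ

namespace PetriNet

variable {P T : Type}

/-- The effect of firing a single transition on the number of tokens in a place. -/
def eff (N : PetriNet P T) (t : T) (p : P) : ℤ :=
  (N.Post p t : ℤ) - (N.Pre p t : ℤ)

/-- The total effect of a sequence of transitions on a place. -/
def seqEff (N : PetriNet P T) (σ : List T) (p : P) : ℤ :=
  (σ.map fun t => N.eff t p).sum

/-- The effect on `p` of the transition at position `i` of `σ` (`0` if out of range). -/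
def effAt (N : PetriNet P T) (σ : List T) (i : ℕ) (p : P) : ℤ :=
  N.seqEff ((σ.drop i).take 1) p

/-- `W` is an upper bound for all arc weights, and `W ≥ 1`. -/
def WeightBound (N : PetriNet P T) (W : ℕ) : Prop :=
  1 ≤ W ∧ ∀ p t, N.Pre p t ≤ W ∧ N.Post p t ≤ W

/-- The firing sequence `σ` is enabled at the marking `M₀`. -/
def SeqEnabled (N : PetriNet P T) (M₀ : P → ℕ) (σ : List T) : Prop :=
  ∀ i (hi : i < σ.length) (p : P),
    (N.Pre p (σ.get ⟨i, hi⟩) : ℤ) ≤ (M₀ p : ℤ) + N.seqEff (σ.take i) p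

/-- `M₀ ⟹σ M` : firing `σ` at `M₀` yields `M`. -/
def Fires (N : PetriNet P T) (M₀ : P → ℕ) (σ : List T) (M : P → ℕ) : Prop :=
  N.SeqEnabled M₀ σ ∧ ∀ p, (M p : ℤ) = (M₀ p : ℤ) + N.seqEff σ p

/-- `M` is reachable from `M₀`. -/
def Reachable (N : PetriNet P T) (M₀ M : P → ℕ) : Prop :=
  ∃ σ : List T, N.Fires M₀ σ M

/-- Adjacency in the graph `G(N)` associated with the net. -/
def Adj (N : PetriNet P T) (p₁ p₂ : P) : Prop :=
  ∃ t, 1 ≤ N.Pre p₁ t + N.Post p₁ t ∧ 1 ≤ N.Pre p₂ t + N.Post p₂ t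

/-- `VC` is a vertex cover of `G(N)`. -/
def IsVertexCover (N : PetriNet P T) (VC : Set P) : Prop :=
  ∀ p₁ p₂, N.Adj p₁ p₂ → p₁ ∈ VC ∨ p₂ ∈ VC

/-- The two transitions have the same type (relative to the vertex cover `VC`). -/
def SameType (N : PetriNet P T) (VC : Set P) (t₁ t₂ : T) : Prop :=
  ∀ p ∈ VC, N.Pre p t₁ = N.Pre p t₂ ∧ N.Post p t₁ = N.Post p t₂

/-- The two places (both outside the vertex cover `VC`) have the same variety:
for every type of transitions and every nonzero weight `w`, some transition of that
type has effect `w` on `p₁` iff some transition of that type has effect `w` on `p₂`. -/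
def SameVariety (N : PetriNet P T) (VC : Set P) (p₁ p₂ : P) : Prop :=
  p₁ ∉ VC ∧ p₂ ∉ VC ∧
  ∀ (t : T) (w : ℤ), w ≠ 0 →
    ((∃ t', N.SameType VC t t' ∧ N.eff t' p₁ = w) ↔
     (∃ t', N.SameType VC t t' ∧ N.eff t' p₂ = w))

/-- A choice, for each variety of a place outside `VC`, of one designated
special place of that variety. -/
structure SpecialChoice (N : PetriNet P T) (VC : Set P) where
  sp : P → P
  not_mem : ∀ p, p ∉ VC → sp p ∉ VC
  variety : ∀ p, p ∉ VC → N.SameVariety VC p (sp p)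
  const : ∀ p₁ p₂, p₁ ∉ VC → p₂ ∉ VC → N.SameVariety VC p₁ p₂ → sp p₁ = sp p₂

/-- The set `S` of special places. -/
def specialSet (N : PetriNet P T) (VC : Set P) (C : N.SpecialChoice VC) : Set P :=
  VC ∪ {q | ∃ p, p ∉ VC ∧ C.sp p = q}

/-- The set `I` of independent places. -/
def indepSet (N : PetriNet P T) (VC : Set P) (C : N.SpecialChoice VC) : Set P :=
  (N.specialSet VC C)ᶜ

/-- All intermediate markings along `σ` from the integer marking `M` are
nonnegative on `Q`. -/
def QRun (N : PetriNet P T) (Q : Set P) (M : P → ℤ) (σ : List T) : Prop :=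
  ∀ i, i ≤ σ.length → ∀ q ∈ Q, 0 ≤ M q + N.seqEff (σ.take i) q

/-- `σ` is `Q`-covering from `M`, with target marking `Mcov`. -/
def QCovering (N : PetriNet P T) (Q : Set P) (Mcov : P → ℕ) (M : P → ℤ)
    (σ : List T) : Prop :=
  N.QRun Q M σ ∧ ∀ q ∈ Q, (Mcov q : ℤ) ≤ M q + N.seqEff σ q

/-- `lencov Q M Mcov` : the length of the shortest `Q`-covering sequence from `M`
(`0` if there is none). -/
noncomputable def lencov (N : PetriNet P T) (Q : Set P) (M : P → ℤ)
    (Mcov : P → ℕ) : ℕ :=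
  sInf {r | ∃ σ : List T, σ.length = r ∧ N.QCovering Q Mcov M σ}

/-- `ℓ(i)`, as an extended natural number. -/
noncomputable def ellCov (N : PetriNet P T) (VC : Set P) (C : N.SpecialChoice VC)
    (Mcov : P → ℕ) (i : ℕ) : ℕ∞ :=
  ⨆ (Q : Set P) (_ : N.indepSet VC C ⊆ Q)
    (_ : (Q \ N.indepSet VC C).ncard = i) (M : P → ℤ),
    (N.lencov Q M Mcov : ℕ∞)

/-- `σ` is a `Q`-enabled self-covering sequence from the integer marking `M`. -/
def QSelfCovering (N : PetriNet P T) (Q : Set P) (M : P → ℤ) (σ : List T) : Prop :=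
  N.QRun Q M σ ∧ ∃ r' < σ.length,
    (∀ p, M p + N.seqEff (σ.take r') p ≤ M p + N.seqEff σ p) ∧
    (fun p => M p + N.seqEff (σ.take r') p) ≠ (fun p => M p + N.seqEff σ p)

/-- `σ` is a self-covering sequence enabled at the marking `M₀`. -/
def SelfCovering (N : PetriNet P T) (M₀ : P → ℕ) (σ : List T) : Prop :=
  N.SeqEnabled M₀ σ ∧ ∃ r' < σ.length,
    (∀ p, (M₀ p : ℤ) + N.seqEff (σ.take r') p ≤ (M₀ p : ℤ) + N.seqEff σ p) ∧
    (fun p => (M₀ p : ℤ) + N.seqEff (σ.take r') p) ≠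
      (fun p => (M₀ p : ℤ) + N.seqEff σ p)

open scoped Classical in
/-- `slencov(Q, j, M)` (relative to the fixed bound `U'` and the set `Ind` of
independent places). -/
noncomputable def slencov (N : PetriNet P T) (Ind : Set P) (U' W j : ℕ)
    (Q : Set P) (M : P → ℤ) : ℕ :=
  if ∃ σ : List T, N.QSelfCovering Q M σ ∧
      ∀ i ≤ σ.length, ∀ p ∈ Ind,
        M p + N.seqEff (σ.take i) p ≤ ((U' + j * W : ℕ) : ℤ)
  then sInf {r | ∃ σ : List T, σ.length = r ∧ N.QSelfCovering Q M σ}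
  else 0

/-- `ℓ₁(i, j)`, as an extended natural number. -/
noncomputable def ell1 (N : PetriNet P T) (VC : Set P) (C : N.SpecialChoice VC)
    (U' W : ℕ) (i j : ℕ) : ℕ∞ :=
  ⨆ (Q : Set P) (_ : N.indepSet VC C ⊆ Q)
    (_ : (Q \ N.indepSet VC C).ncard = i) (M : P → ℤ),
    (N.slencov (N.indepSet VC C) U' W j Q M : ℕ∞)

/-- The transition sequence underlying a decomposition
`σ₁'σ̲₁σ₂'σ̲₂⋯σ_α'σ̲_α`, given as the list of pairs `(σ_λ', σ̲_λ)`. -/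
def decompSeq (D : List (List T × List T)) : List T :=
  (D.map fun x => x.1 ++ x.2).flatten

/-- Conditions (1)–(2) of an `X`-pumping sequence, for the list `pumps` of
pumping portions. -/
def PumpingConds (N : PetriNet P T) (X : Set P) (pumps : List (List T)) : Prop :=
  (∀ l (hl : l < pumps.length) (p : P),
      N.seqEff (pumps.get ⟨l, hl⟩) p < 0 →
      ∃ μ, ∃ hμ : μ < l, 0 < N.seqEff (pumps.get ⟨μ, hμ.trans hl⟩) p) ∧
  ∀ x ∈ X, ∃ l, ∃ hl : l < pumps.length, 0 < N.seqEff (pumps.get ⟨l, hl⟩) x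

/-- `σ` is an `X`-pumping sequence enabled at `M₀`. -/
def IsPumpingSeq (N : PetriNet P T) (M₀ : P → ℕ) (X : Set P) (σ : List T) : Prop :=
  N.SeqEnabled M₀ σ ∧
  ∃ D : List (List T × List T), decompSeq D = σ ∧ N.PumpingConds X (D.map Prod.snd)

/-- The position in `decompSeq D` just after the `μ`-th pumping portion. -/
def endPos (D : List (List T × List T)) (μ : ℕ) : ℕ :=
  (decompSeq (D.take (μ + 1))).length

/-- Position `i` of `decompSeq D` lies in the caring zone of the place `p`. -/
def InCaringZone (N : PetriNet P T) (D : List (List T × List T)) (p : P)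
    (i : ℕ) : Prop :=
  ∀ μ (hμ : μ < D.length), 0 < N.seqEff (D.get ⟨μ, hμ⟩).2 p → i ≤ endPos D μ

/-- The decomposition `D` witnesses that `decompSeq D` is a `Y`-neglecting weakly
`M, Q, c`-enabled `X`-pumping sequence (`Ind` is the set of independent places and
`c = ⊤` encodes `ω`). -/
def IsWeakPumping (N : PetriNet P T) (Ind Q Y X : Set P) (M : P → ℤ)
    (c : WithTop ℤ) (D : List (List T × List T)) : Prop :=
  (∀ l (hl : l < D.length) (p : P),
      N.seqEff (D.get ⟨l, hl⟩).2 p < 0 →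
      (∃ μ, ∃ hμ : μ < l, 0 < N.seqEff (D.get ⟨μ, hμ.trans hl⟩).2 p) ∨ p ∈ Y) ∧
  (∀ x ∈ X, x ∉ Y ∧ ∃ l, ∃ hl : l < D.length, 0 < N.seqEff (D.get ⟨l, hl⟩).2 x) ∧
  (∀ i ≤ (decompSeq D).length, ∀ q ∈ Q, q ∉ Ind →
      ((M q + N.seqEff ((decompSeq D).take i) q : ℤ) : WithTop ℤ) < c) ∧
  (∀ i ≤ (decompSeq D).length, ∀ p ∈ Q,
      M p + N.seqEff ((decompSeq D).take i) p < 0 →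
      (∃ μ, ∃ hμ : μ < D.length, endPos D μ ≤ i ∧
        0 < N.seqEff (D.get ⟨μ, hμ⟩).2 p) ∨ p ∈ Y)

open scoped Classical in
/-- `pumlen(Q, j, M, X, Y)` (relative to the fixed bound `U'` and the set `Ind`
of independent places). -/
noncomputable def pumlen (N : PetriNet P T) (Ind : Set P) (U' W j : ℕ)
    (Q : Set P) (M : P → ℤ) (X Y : Set P) : ℕ :=
  if ∃ D : List (List T × List T), N.IsWeakPumping Ind Q Y X M ⊤ D ∧
      ∀ p ∈ Ind, p ∉ Y → ∀ i ≤ (decompSeq D).length, N.InCaringZone D p i →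
        M p + N.seqEff ((decompSeq D).take i) p ≤ ((U' + j * W : ℕ) : ℤ)
  then sInf {r | ∃ D : List (List T × List T),
      (decompSeq D).length = r ∧ N.IsWeakPumping Ind Q Y X M ⊤ D}
  else 0

/-- `ℓ₂(i, j)`, as an extended natural number. -/
noncomputable def ell2 (N : PetriNet P T) (VC : Set P) (C : N.SpecialChoice VC)
    (U' W : ℕ) (i j : ℕ) : ℕ∞ :=
  ⨆ (Q : Set P) (_ : N.indepSet VC C ⊆ Q)
    (_ : (Q \ N.indepSet VC C).ncard = i) (M : P → ℤ)
    (X : Set P) (Y : Set P) (_ : X.Nonempty),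
    (N.pumlen (N.indepSet VC C) U' W j Q M X Y : ℕ∞)

/-- The sub-word of `σ` given by the set `s` of positions is safe for transfer
from the place `p`: every prefix has nonnegative total effect on `p`. -/
def SubwordSafe (N : PetriNet P T) (σ : List T) (s : Finset ℕ) (p : P) : Prop :=
  ∀ j : ℕ, 0 ≤ ∑ i ∈ s.filter (fun i => i < j), N.effAt σ i p

/-- `σ'` is obtained from `σ` by transferring the sub-word at the positions `s`
from the place `p₁` to the place `p₂`. -/
def IsTransfer (N : PetriNet P T) (VC : Set P) (p₁ p₂ : P) (σ : List T)
    (s : Finset ℕ) (σ' : List T) : Prop :=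
  σ'.length = σ.length ∧
  (∀ i ∈ s, i < σ.length) ∧
  ∀ i (hi : i < σ.length) (hi' : i < σ'.length),
    if i ∈ s then
      N.SameType VC (σ.get ⟨i, hi⟩) (σ'.get ⟨i, hi'⟩) ∧
      (N.Pre p₁ (σ.get ⟨i, hi⟩) ≠ 0 ∨ N.Post p₁ (σ.get ⟨i, hi⟩) ≠ 0) ∧
      N.Pre p₂ (σ'.get ⟨i, hi'⟩) = N.Pre p₁ (σ.get ⟨i, hi⟩) ∧
      N.Post p₂ (σ'.get ⟨i, hi'⟩) = N.Post p₁ (σ.get ⟨i, hi⟩)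
    else σ'.get ⟨i, hi'⟩ = σ.get ⟨i, hi⟩

/-- The decomposition `σ₁'σ₁^{n₁}σ̲₁σ₁^{n₁'}σ₂'⋯σ_α'σ_α^{n_α}σ̲_α` obtained from
`D` by inserting extra (non-pumping) copies of the pumping portions. -/
def replicateDecomp (D : List (List T × List T)) (n n' : ℕ → ℕ) :
    List (List T × List T) :=
  D.mapIdx fun l pr =>
    ((if l = 0 then ([] : List T)
        else (List.replicate (n' (l - 1)) (D.getD (l - 1) ([], [])).2).flatten)
       ++ pr.1 ++ (List.replicate (n l) pr.2).flatten, pr.2)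

/-! Inserting a copy of a pumping portion `w` directly next to `w` itself leaves the pumping
portions and every marking before the copy unchanged, and raises every later marking by `Δ[w]`
compared with the corresponding old one. If `Δ[w](p) < 0` and `p ∉ Y`, condition (1) supplies
a pump that is positive on `p` and ends before `w`, which excuses all later negative values of
`p`; otherwise the new markings dominate the old ones, so condition (4) carries over. The decomposition
`replicateDecomp D n n'` arises from `D` by finitely many such duplications. -/

lemma seqEff_append (N : PetriNet P T) (σ τ : List T) (p : P) :
    N.seqEff (σ ++ τ) p = N.seqEff σ p + N.seqEff τ p := by
  simp [seqEff]

lemma take_dup_of_lt {A w B : List T} {i : ℕ} (hi : i < A.length + w.length) :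
    (A ++ w ++ (w ++ B)).take i = (A ++ w ++ B).take i := by
  have hi' : i ≤ (A ++ w).length := by simp; omega
  rw [List.take_append_of_le_length hi', List.take_append_of_le_length hi']

lemma seqEff_take_dup (N : PetriNet P T) {A w B : List T} {i : ℕ}
    (hi : A.length + w.length ≤ i) (p : P) :
    N.seqEff ((A ++ w ++ (w ++ B)).take i) p
      = N.seqEff ((A ++ w ++ B).take (i - w.length)) p + N.seqEff w p := by
  obtain ⟨j, rfl⟩ := Nat.exists_eq_add_of_le hi
  rw [show A.length + w.length + j - w.length = A.length + j by omega, List.append_assoc A w B,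
    ← List.length_append, List.take_length_add_append, List.take_length_add_append]
  simp only [seqEff_append]
  ring

lemma decompSeq_append (D E : List (List T × List T)) :
    decompSeq (D ++ E) = decompSeq D ++ decompSeq E := by
  simp [decompSeq]

lemma decompSeq_cons (x : List T × List T) (D : List (List T × List T)) :
    decompSeq (x :: D) = x.1 ++ x.2 ++ decompSeq D := by
  simp [decompSeq]

lemma endPos_le_length (D : List (List T × List T)) (ν : ℕ) :
    endPos D ν ≤ (decompSeq D).length := by
  conv_rhs => rw [← List.take_append_drop (ν + 1) D, decompSeq_append, List.length_append]
  exact Nat.le_add_right _ _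

lemma endPos_append_cons (E F : List (List T × List T)) (y : List T × List T) (ν : ℕ) :
    endPos (E ++ y :: F) ν = if ν < E.length then endPos E ν
      else (decompSeq E).length + y.1.length + y.2.length
        + (decompSeq (F.take (ν - E.length))).length := by
  unfold endPos
  rw [List.take_append]
  split_ifs with hν
  · simp [Nat.sub_eq_zero_of_le hν]
  · rw [List.take_of_length_le (by omega), show ν + 1 - E.length = ν - E.length + 1 by omega]
    simp [decompSeq_append, decompSeq_cons]
    omega

inductive DupStep : List (List T × List T) → List (List T × List T) → Prop
  | before (E F : List (List T × List T)) (u w : List T) :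
      DupStep (E ++ (u, w) :: F) (E ++ (u ++ w, w) :: F)
  | after (E F : List (List T × List T)) (u w v z : List T) :
      DupStep (E ++ (u, w) :: (v, z) :: F) (E ++ (u, w) :: (w ++ v, z) :: F)

lemma DupStep.map_snd {D D' : List (List T × List T)} (h : DupStep D D') :
    D'.map Prod.snd = D.map Prod.snd := by
  cases h <;> simp

lemma DupStep.append_right {D D' : List (List T × List T)} (h : DupStep D D')
    (x : List T × List T) : DupStep (D ++ [x]) (D' ++ [x]) := by
  cases h with
  | before E F u w => simpa using DupStep.before E (F ++ [x]) u w
  | after E F u w v z => simpa using DupStep.after E (F ++ [x]) u w v z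

lemma DupStep.exists_split {D D' : List (List T × List T)} (h : DupStep D D') :
    ∃ (A w B : List T) (l : ℕ) (hl : l < D.length),
      (D.get ⟨l, hl⟩).2 = w ∧ decompSeq D = A ++ w ++ B ∧
      decompSeq D' = A ++ w ++ (w ++ B) ∧
      (∀ ν < l, endPos D' ν = endPos D ν ∧ endPos D ν ≤ A.length) ∧
      (∀ ν, l ≤ ν → A.length + w.length ≤ endPos D ν) ∧
      ∀ ν, endPos D' ν ≤ endPos D ν + w.length := by
  cases h with
  | before E F u w =>
    refine ⟨decompSeq E ++ u, w, decompSeq F, E.length, by simp, by simp, ?_, ?_, ?_, ?_, ?_⟩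
    · simp [decompSeq_append, decompSeq_cons]
    · simp [decompSeq_append, decompSeq_cons]
    · intro ν hν
      rw [endPos_append_cons, endPos_append_cons, if_pos hν, if_pos hν]
      exact ⟨rfl, (endPos_le_length E ν).trans (by simp)⟩
    · intro ν hν
      simp only [endPos_append_cons, if_neg (Nat.not_lt.mpr hν), List.length_append]
      omega
    · intro ν
      simp only [endPos_append_cons, List.length_append]
      split_ifs <;> omega
  | after E F u w v z =>
    refine ⟨decompSeq E ++ u, w, v ++ z ++ decompSeq F, E.length, by simp, by simp, ?_, ?_, ?_,
      ?_, ?_⟩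
    · simp [decompSeq_append, decompSeq_cons]
    · simp [decompSeq_append, decompSeq_cons]
    · intro ν hν
      rw [endPos_append_cons, endPos_append_cons, if_pos hν, if_pos hν]
      exact ⟨rfl, (endPos_le_length E ν).trans (by simp)⟩
    · intro ν hν
      simp only [endPos_append_cons, if_neg (Nat.not_lt.mpr hν), List.length_append]
      omega
    · intro ν
      simp only [endPos_append_cons]
      split_ifs
      · omega
      · obtain ⟨k, rfl⟩ := Nat.exists_eq_add_of_le (Nat.not_lt.mp ‹_›)
        cases k with
        | zero => simp
        | succ k => simp [decompSeq_cons]; omega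

lemma snd_get_eq_of_map_snd_eq {D D' : List (List T × List T)}
    (h : D'.map Prod.snd = D.map Prod.snd) {l : ℕ} (hl' : l < D'.length) (hl : l < D.length) :
    (D'.get ⟨l, hl'⟩).2 = (D.get ⟨l, hl⟩).2 := by
  simpa [hl, hl'] using congrArg (·[l]?) h

lemma IsWeakPumping.of_dupStep {N : PetriNet P T} {Ind Q Y X : Set P} {M : P → ℤ}
    {D D' : List (List T × List T)} (hD : N.IsWeakPumping Ind Q Y X M ⊤ D)
    (hs : DupStep D D') : N.IsWeakPumping Ind Q Y X M ⊤ D' := by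
  obtain ⟨h1, h2, -, h4⟩ := hD
  have hsnd := hs.map_snd
  have hlen : D'.length = D.length := by simpa using congrArg List.length hsnd
  have pump (l : ℕ) (hl : l < D'.length) :
      (D'.get ⟨l, hl⟩).2 = (D.get ⟨l, hlen ▸ hl⟩).2 :=
    snd_get_eq_of_map_snd_eq hsnd hl _
  refine ⟨?_, ?_, fun _ _ _ _ _ => WithTop.coe_lt_top _, ?_⟩
  · intro l hl p hneg
    rw [pump] at hneg
    refine (h1 l _ p hneg).imp (fun ⟨μ, hμ, hpos⟩ => ⟨μ, hμ, ?_⟩) id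
    rwa [pump]
  · intro x hx
    obtain ⟨hxY, l, hl, hpos⟩ := h2 x hx
    exact ⟨hxY, l, hlen ▸ hl, by rwa [pump]⟩
  · obtain ⟨A, w, B, l, hl, hw, hσ, hσ', hbefore, hafter, hshift⟩ := hs.exists_split
    intro i hi p hp hneg
    rw [hσ'] at hi hneg
    simp only [pump]
    by_cases hiA : i < A.length + w.length
    · rw [take_dup_of_lt hiA, ← hσ] at hneg
      refine (h4 i (by rw [hσ]; simp at hi ⊢; omega) p hp hneg).imp ?_ id
      rintro ⟨μ, hμ, hend, hpos⟩
      have hμl : μ < l := by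
        by_contra h
        have := hafter μ (Nat.not_lt.mp h)
        omega
      exact ⟨μ, hlen ▸ hμ, (hbefore μ hμl).1 ▸ hend, hpos⟩
    · rw [seqEff_take_dup N (Nat.not_lt.mp hiA), ← hσ] at hneg
      by_cases hw0 : N.seqEff w p < 0
      · rw [← hw] at hw0
        refine (h1 l hl p hw0).imp ?_ id
        rintro ⟨μ, hμ, hpos⟩
        obtain ⟨hμeq, hμA⟩ := hbefore μ hμ
        exact ⟨μ, by omega, by omega, hpos⟩
      · refine (h4 (i - w.length) (by rw [hσ]; simp at hi ⊢; omega) p hp (by omega)).imp ?_ id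
        rintro ⟨μ, hμ, hend, hpos⟩
        exact ⟨μ, hlen ▸ hμ, (hshift μ).trans (by omega), hpos⟩

lemma replicateDecomp_concat (D : List (List T × List T)) (x : List T × List T)
    (n n' : ℕ → ℕ) :
    replicateDecomp (D ++ [x]) n n' = replicateDecomp D n n' ++
      [((if D.length = 0 then []
          else (List.replicate (n' (D.length - 1)) (D.getD (D.length - 1) ([], [])).2).flatten)
        ++ x.1 ++ (List.replicate (n D.length) x.2).flatten, x.2)] := by
  unfold replicateDecomp
  rw [List.mapIdx_concat]
  congr 1
  · refine List.ext_getElem (by simp) fun l _ hl => ?_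
    simp only [List.getElem_mapIdx]
    split_ifs with h0
    · rfl
    · rw [List.getD_append _ _ _ _ (by simp at hl; omega)]
  · split_ifs with h0
    · rfl
    · rw [List.getD_append _ _ _ _ (by omega)]

open Relation

lemma reflTransGen_dupStep_pad_back (E : List (List T × List T)) (u w : List T) (k : ℕ) :
    ReflTransGen DupStep (E ++ [(u, w)]) (E ++ [(u ++ (List.replicate k w).flatten, w)]) := by
  induction k with
  | zero => simpa using ReflTransGen.refl
  | succ k ih =>
    refine ih.tail ?_
    simpa [List.replicate_succ'] using DupStep.before E [] (u ++ (List.replicate k w).flatten) w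

lemma reflTransGen_dupStep_pad_front (E : List (List T × List T)) (u w v z : List T) (k : ℕ) :
    ReflTransGen DupStep (E ++ [(u, w), (v, z)])
      (E ++ [(u, w), ((List.replicate k w).flatten ++ v, z)]) := by
  induction k with
  | zero => simpa using ReflTransGen.refl
  | succ k ih =>
    refine ih.tail ?_
    simpa [List.replicate_succ] using
      DupStep.after E [] u w ((List.replicate k w).flatten ++ v) z

lemma reflTransGen_dupStep_replicateDecomp (D : List (List T × List T)) (n n' : ℕ → ℕ) :
    ReflTransGen DupStep D (replicateDecomp D n n') := by
  induction D using List.reverseRecOn with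
  | nil => exact ReflTransGen.refl
  | append_singleton D x ih =>
    rw [replicateDecomp_concat]
    refine (ih.lift (· ++ [x]) fun _ _ h => h.append_right x).trans (ReflTransGen.trans ?_
      (reflTransGen_dupStep_pad_back _ _ x.2 _))
    rcases D.eq_nil_or_concat with rfl | ⟨D, y, rfl⟩
    · exact ReflTransGen.refl
    · rw [List.concat_eq_append, replicateDecomp_concat D y]
      simpa using reflTransGen_dupStep_pad_front (replicateDecomp D n n') _ y.2 x.1 x.2
        (n' D.length)

lemma IsWeakPumping.of_reflTransGen {N : PetriNet P T} {Ind Q Y X : Set P} {M : P → ℤ}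
    {D D' : List (List T × List T)} (hD : N.IsWeakPumping Ind Q Y X M ⊤ D)
    (hs : ReflTransGen DupStep D D') : N.IsWeakPumping Ind Q Y X M ⊤ D' := by
  induction hs with
  | refl => exact hD
  | tail _ hs ih => exact ih.of_dupStep hs

theorem weak_pumping_replicate_general {P T : Type} (N : PetriNet P T)
    (VC : Set P) (C : N.SpecialChoice VC) (Q Y X : Set P)
    (M : P → ℤ) (D : List (List T × List T))
    (hD : N.IsWeakPumping (N.indepSet VC C) Q Y X M ⊤ D) (n n' : ℕ → ℕ) :
    N.IsWeakPumping (N.indepSet VC C) Q Y X M ⊤ (replicateDecomp D n n') :=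
  hD.of_reflTransGen (reflTransGen_dupStep_replicateDecomp D n n')

/-- Inserting extra copies of the pumping portions preserves weakly enabled
pumping sequences. -/
theorem weak_pumping_replicate {P T : Type} [Fintype P] [Fintype T]
    (N : PetriNet P T) (W : ℕ) (hW : N.WeightBound W)
    (VC : Set P) (hVC : N.IsVertexCover VC) (C : N.SpecialChoice VC)
    (Q Y X : Set P) (hQ : N.indepSet VC C ⊆ Q) (hX : X.Nonempty)
    (M : P → ℤ) (D : List (List T × List T))
    (hD : N.IsWeakPumping (N.indepSet VC C) Q Y X M ⊤ D) (n n' : ℕ → ℕ) :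
    N.IsWeakPumping (N.indepSet VC C) Q Y X M ⊤ (replicateDecomp D n n') :=
  weak_pumping_replicate_general N VC C Q Y X M D hD n n'

end PetriNet
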